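/- If a cost game v : 2^C → ℝ with v(∅) = 0 is submodular (v(S∪{j}) − v(S) ≤ v(T∪{j}) − v(T) for all T ⊆ S ⊆ C∖{j} and j ∉ S), then its core is nonempty: there exists p ∈ ℝ^C with ∑_{j∈C} p_j = v(C) and ∑_{j∈S} p_j ≤ v(S) for all S ⊆ C. In particular, for any ordering σ of C, the marginal-cost vector p_{σ(k)} = v({σ(1),…,σ(k)}) − v({σ(1),…,σ(k−1)}) lies in the core. -/

import Mathlib

/-!
Adding the agents one at a time in the order `σ` and charging each its marginal cost makes the
payments telescope to `v C`. For a coalition `S`, the agents of `S` are charged their marginal cost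
with respect to the whole prefix before them; by submodularity this is at most their marginal cost
with respect to the part of `S` in that prefix, and these smaller marginal costs telescope to `v S`.
-/

open Finset

section Submodular

variable {α : Type*} [DecidableEq α]

def IsSubmodular (v : Finset α → ℝ) : Prop :=
  ∀ (j : α) (S T : Finset α), T ⊆ S → j ∉ S → v (insert j S) - v S ≤ v (insert j T) - v T

def costCore [Fintype α] (v : Finset α → ℝ) : Set (α → ℝ) :=
  {p | ∑ j, p j = v univ ∧ ∀ S : Finset α, ∑ j ∈ S, p j ≤ v S}

theorem IsSubmodular.sum_inter_insert_le {v : Finset α → ℝ} (hv : IsSubmodular v)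
    {p : α → ℝ} {A S : Finset α} {a : α} (ha : a ∉ A) (hpa : p a = v (insert a A) - v A)
    (hA : ∑ j ∈ S ∩ A, p j ≤ v (S ∩ A) - v ∅) :
    ∑ j ∈ S ∩ insert a A, p j ≤ v (S ∩ insert a A) - v ∅ := by
  by_cases haS : a ∈ S
  · have haSA : a ∉ S ∩ A := fun h => ha (mem_inter.mp h).2
    have hmarginal := hv a A (S ∩ A) inter_subset_right ha
    rw [inter_insert_of_mem haS, sum_insert haSA]
    linarith
  · rwa [inter_insert_of_notMem haS]

end Submodular

section Marginal

variable {n : ℕ}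

def permPrefix (σ : Equiv.Perm (Fin n)) (k : ℕ) : Finset (Fin n) :=
  univ.filter fun i => ((σ.symm i : Fin n) : ℕ) < k

def marginalVector (v : Finset (Fin n) → ℝ) (σ : Equiv.Perm (Fin n)) (i : Fin n) : ℝ :=
  v (permPrefix σ ((σ.symm i : ℕ) + 1)) - v (permPrefix σ (σ.symm i))

variable (σ : Equiv.Perm (Fin n))

@[simp]
theorem permPrefix_zero : permPrefix σ 0 = ∅ := by
  simp [permPrefix]

theorem permPrefix_self : permPrefix σ n = univ := by
  ext i
  simp [permPrefix]

theorem permPrefix_succ {k : ℕ} (hk : k < n) :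
    permPrefix σ (k + 1) = insert (σ ⟨k, hk⟩) (permPrefix σ k) := by
  ext i
  simp only [permPrefix, mem_filter, mem_univ, true_and, mem_insert, Nat.lt_succ_iff_lt_or_eq,
    ← Equiv.symm_apply_eq, Fin.ext_iff]
  exact or_comm

theorem apply_notMem_permPrefix {k : ℕ} (hk : k < n) : σ ⟨k, hk⟩ ∉ permPrefix σ k := by
  simp [permPrefix]

theorem marginalVector_apply (v : Finset (Fin n) → ℝ) (k : Fin n) :
    marginalVector v σ (σ k) = v (permPrefix σ (k + 1)) - v (permPrefix σ k) := by
  simp [marginalVector]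

theorem sum_marginalVector (v : Finset (Fin n) → ℝ) :
    ∑ j, marginalVector v σ j = v univ - v ∅ := by
  rw [← Equiv.sum_comp σ]
  simp only [marginalVector_apply]
  rw [Fin.sum_univ_eq_sum_range (fun k => v (permPrefix σ (k + 1)) - v (permPrefix σ k)),
    sum_range_sub (fun k => v (permPrefix σ k)), permPrefix_self, permPrefix_zero]

theorem IsSubmodular.sum_inter_permPrefix_le {v : Finset (Fin n) → ℝ} (hv : IsSubmodular v)
    (S : Finset (Fin n)) {k : ℕ} (hk : k ≤ n) :
    ∑ j ∈ S ∩ permPrefix σ k, marginalVector v σ j ≤ v (S ∩ permPrefix σ k) - v ∅ := by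
  induction k with
  | zero => simp
  | succ k ih =>
    rw [permPrefix_succ σ hk]
    refine hv.sum_inter_insert_le (apply_notMem_permPrefix σ hk) ?_ (ih (by omega))
    rw [marginalVector_apply σ v ⟨k, hk⟩, ← permPrefix_succ σ hk]

theorem IsSubmodular.marginalVector_mem_costCore {v : Finset (Fin n) → ℝ} (hv : IsSubmodular v)
    (hempty : v ∅ = 0) : marginalVector v σ ∈ costCore v := by
  refine ⟨by rw [sum_marginalVector, hempty, sub_zero], fun S => ?_⟩
  simpa [permPrefix_self, hempty] using hv.sum_inter_permPrefix_le σ S le_rfl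

end Marginal

theorem submodular_cost_game_core_nonempty_marginal
    (n : ℕ) (v : Finset (Fin n) → ℝ)
    (hempty : v ∅ = 0)
    (hsub : ∀ (j : Fin n) (S T : Finset (Fin n)), T ⊆ S → j ∉ S →
      v (insert j S) - v S ≤ v (insert j T) - v T) :
    (∃ p : Fin n → ℝ,
      ∑ j, p j = v Finset.univ ∧ ∀ S : Finset (Fin n), ∑ j ∈ S, p j ≤ v S) ∧
    (∀ σ : Equiv.Perm (Fin n),
      let pref : ℕ → Finset (Fin n) := fun k =>
        Finset.univ.filter fun i => ((σ.symm i : Fin n) : ℕ) < k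
      let p : Fin n → ℝ := fun i =>
        v (pref (((σ.symm i : Fin n) : ℕ) + 1)) - v (pref ((σ.symm i : Fin n) : ℕ))
      ∑ j, p j = v Finset.univ ∧ ∀ S : Finset (Fin n), ∑ j ∈ S, p j ≤ v S) := by
  have hv : IsSubmodular v := hsub
  have hcore (σ : Equiv.Perm (Fin n)) := hv.marginalVector_mem_costCore σ hempty
  exact ⟨⟨_, hcore 1⟩, hcore⟩
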